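/- For every ε > 0 there exists N such that every tournament T on n ≥ N vertices satisfies p(Tr_4, T) ≥ (2/3) · p(Tr_3, T)² − ε. -/

import Mathlib

/-- A tournament on `n` vertices: an irreflexive relation such that for every
pair of distinct vertices exactly one direction holds. -/
structure Tournament (n : ℕ) where
  rel : Fin n → Fin n → Bool
  irrefl : ∀ v, rel v v = false
  total : ∀ u v, u ≠ v → rel u v = !rel v u

/-- The transitive tournament `Tr_k`. -/
def Tr (k : ℕ) : Tournament k where
  rel i j := decide (i < j)
  irrefl v := by simp
  total u v h := by
    rcases h.lt_or_gt with h' | h'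
    · simp [h', not_lt_of_gt h']
    · simp [h', not_lt_of_gt h']

/-- The cyclic triangle. -/
def C3 : Tournament 3 where
  rel := ![![false, true, false], ![false, false, true], ![true, false, false]]
  irrefl := by decide
  total := by decide

/-- `W₄`: the non-transitive tournament on 4 vertices with a "winner". -/
def W4 : Tournament 4 where
  rel := ![![false, true, true, true], ![false, false, true, false],
           ![false, false, false, true], ![false, true, false, false]]
  irrefl := by decide
  total := by decide

/-- `L₄`: the non-transitive tournament on 4 vertices with a "loser". -/
def L4 : Tournament 4 where
  rel := ![![false, true, false, true], ![false, false, true, true],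
           ![true, false, false, true], ![false, false, false, false]]
  irrefl := by decide
  total := by decide

/-- `R₄`: the tournament on 4 vertices with out-degree sequence (1,1,2,2). -/
def R4 : Tournament 4 where
  rel := ![![false, true, true, false], ![false, false, true, true],
           ![false, false, false, true], ![true, false, false, false]]
  irrefl := by decide
  total := by decide

/-- Two tournaments on the same number of vertices are isomorphic if some
permutation of the vertices carries one arc relation to the other. -/
def Isomorphic {k : ℕ} (S T : Tournament k) : Prop :=
  ∃ e : Equiv.Perm (Fin k), ∀ i j, S.rel i j = T.rel (e i) (e j)

/-- The subtournament of `T` induced on the subset `A` is isomorphic to `S`. -/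
def IsoOn {k n : ℕ} (S : Tournament k) (T : Tournament n) (A : Finset (Fin n)) : Prop :=
  ∃ f : Fin k → Fin n, Function.Injective f ∧ Finset.univ.image f = A ∧
    ∀ i j, S.rel i j = T.rel (f i) (f j)

open scoped Classical in
/-- The number of `k`-element subsets of the vertex set of `T` whose induced
subtournament is isomorphic to `S` (where `S` has `k` vertices). -/
noncomputable def copyCount {k n : ℕ} (S : Tournament k) (T : Tournament n) : ℕ :=
  ((Finset.powersetCard k (Finset.univ : Finset (Fin n))).filter (IsoOn S T)).card

/-- The (unlabelled) density `p(S, T)`. -/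
noncomputable def density {k n : ℕ} (S : Tournament k) (T : Tournament n) : ℝ :=
  (copyCount S T : ℝ) / (n.choose k : ℝ)

/-- The number of automorphisms of a tournament. -/
def autCount {k : ℕ} (S : Tournament k) : ℕ :=
  (Finset.univ.filter
    (fun e : Equiv.Perm (Fin k) => ∀ i j, S.rel i j = S.rel (e i) (e j))).card

/-- A sequence of tournaments with growing vertex sets is quasi-random if every
fixed tournament `S` on `k` vertices appears with density tending to
`k! / (|Aut S| * 2^(k(k-1)/2))`. -/
def QuasiRandom {nn : ℕ → ℕ} (T : ∀ j, Tournament (nn j)) : Prop :=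
  ∀ (k : ℕ) (S : Tournament k),
    Filter.Tendsto (fun j => density S (T j)) Filter.atTop
      (nhds ((k.factorial : ℝ) / ((autCount S : ℝ) * 2 ^ (k * (k - 1) / 2))))

/-- `D(u,v) = #{w : u→w ∧ w→v}`. -/
def Dcount {n : ℕ} (T : Tournament n) (u v : Fin n) : ℕ :=
  (Finset.univ.filter (fun w => T.rel u w ∧ T.rel w v)).card

/-- `C(u,v) = #{w : v→w ∧ w→u}`. -/
def Ccount {n : ℕ} (T : Tournament n) (u v : Fin n) : ℕ :=
  (Finset.univ.filter (fun w => T.rel v w ∧ T.rel w u)).card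

/-- `I(u,v) = #{w : w→u ∧ w→v}`. -/
def Icount {n : ℕ} (T : Tournament n) (u v : Fin n) : ℕ :=
  (Finset.univ.filter (fun w => T.rel w u ∧ T.rel w v)).card

/-- `O(u,v) = #{w : u→w ∧ v→w}`. -/
def Ocount {n : ℕ} (T : Tournament n) (u v : Fin n) : ℕ :=
  (Finset.univ.filter (fun w => T.rel u w ∧ T.rel v w)).card

/-- The subset `A` induces a transitive subtournament of `T`. -/
def IsTransOn {n : ℕ} (T : Tournament n) (A : Finset (Fin n)) : Prop :=
  ∀ u ∈ A, ∀ v ∈ A, ∀ w ∈ A, T.rel u v → T.rel v w → T.rel u w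

open scoped Classical in
/-- `tr_m(T)`: the number of `m`-element subsets of the vertex set of `T`
inducing a transitive subtournament. -/
noncomputable def trCount (m : ℕ) {n : ℕ} (T : Tournament n) : ℕ :=
  ((Finset.powersetCard m (Finset.univ : Finset (Fin n))).filter (IsTransOn T)).card

/-- The subtournament of `T` induced on a subset `A` of its vertices. -/
noncomputable def induce {n : ℕ} (T : Tournament n) (A : Finset (Fin n)) :
    Tournament A.card where
  rel i j := T.rel (A.orderIsoOfFin rfl i) (A.orderIsoOfFin rfl j)
  irrefl i := T.irrefl _
  total i j h := T.total _ _ (fun hc => h ((A.orderIsoOfFin rfl).injective (Subtype.ext hc)))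

/-- The out-neighbourhood `N⁺(u)` of a vertex. -/
def outSet {n : ℕ} (T : Tournament n) (u : Fin n) : Finset (Fin n) :=
  Finset.univ.filter (fun w => T.rel u w)

/-- The out-degree of a vertex. -/
def outDeg {n : ℕ} (T : Tournament n) (v : Fin n) : ℕ :=
  (Finset.univ.filter (fun w => T.rel v w)).card

/-- The multiset of out-degrees of a tournament. -/
def outDegs {n : ℕ} (T : Tournament n) : Multiset ℕ :=
  Finset.univ.val.map (outDeg T)

/-- The arc relation of `T` is transitive. -/
def IsTransitiveT {k : ℕ} (S : Tournament k) : Prop :=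
  ∀ u v w, S.rel u v → S.rel v w → S.rel u w

/-!
A transitive set of `k ≥ 2` vertices has a unique source `u` and a unique sink `v`, and its other
vertices form a transitive subset of `D(u,v) = {w | u → w → v}`. Since sets of at most two
vertices are transitive, `tr₃ = ∑_{u→v} D(u,v)` and `tr₄ = ∑_{u→v} C(D(u,v), 2)`. Cauchy–Schwarz
over the `C(n,2)` arcs gives `tr₃² ≤ C(n,2) (2 tr₄ + tr₃)`; dividing by `C(n,3)²` and using
`4 C(n,2) C(n,4) ≤ 3 C(n,3)²` yields `(2/3) p(Tr₃)² ≤ p(Tr₄) + 2/(n-2)`.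
-/

open Finset

theorem cast_choose_succ_right_eq {R : Type*} [Ring R] {n k : ℕ} (hk : k ≤ n) :
    (n.choose (k + 1) : R) * (k + 1) = n.choose k * (n - k) := by
  have h := congrArg (Nat.cast (R := R)) (Nat.choose_succ_right_eq n k)
  push_cast [Nat.cast_sub hk] at h
  exact h

namespace Tournament

variable {n : ℕ} (T : Tournament n)

theorem ne_of_rel {u v : Fin n} (h : T.rel u v) : u ≠ v := by
  rintro rfl
  simp [T.irrefl] at h

theorem rel_asymm {u v : Fin n} (h : T.rel u v) : ¬T.rel v u := by
  rw [T.total v u (T.ne_of_rel h).symm, h]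
  decide

theorem rel_or_rel {u v : Fin n} (h : u ≠ v) : T.rel u v ∨ T.rel v u := by
  rw [T.total u v h]
  cases T.rel v u <;> simp

def arcs : Finset (Fin n × Fin n) :=
  univ.filter fun p => T.rel p.1 p.2

/-- `Dcount T u v` counts these vertices. -/
def between (u v : Fin n) : Finset (Fin n) :=
  univ.filter fun w => T.rel u w ∧ T.rel w v

theorem mem_arcs {p : Fin n × Fin n} : p ∈ T.arcs ↔ T.rel p.1 p.2 := by
  simp [arcs]

theorem mem_between {u v w : Fin n} : w ∈ T.between u v ↔ T.rel u w ∧ T.rel w v := by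
  simp [between]

theorem card_arcs_le : #T.arcs ≤ n.choose 2 := by
  calc #T.arcs ≤ #((univ : Finset (Fin n)).powersetCard 2) := by
        refine card_le_card_of_injOn (fun p => {p.1, p.2}) ?_ ?_
        · intro p hp
          simp [card_pair (T.ne_of_rel ((T.mem_arcs).1 hp))]
        · rintro ⟨u, v⟩ huv ⟨u', v'⟩ huv' h
          rw [mem_coe, mem_arcs] at huv huv'
          have h' : ({u, v} : Set (Fin n)) = {u', v'} := by
            simpa using congrArg ((↑) : Finset (Fin n) → Set (Fin n)) h
          rcases Set.pair_eq_pair_iff.1 h' with ⟨rfl, rfl⟩ | ⟨rfl, rfl⟩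
          · rfl
          · exact absurd huv' (T.rel_asymm huv)
    _ = n.choose 2 := by simp

theorem trCount_le_choose (k : ℕ) : trCount k T ≤ n.choose k := by
  classical
  exact (card_filter_le _ _).trans (by simp)

variable {T}

theorem _root_.IsTransOn.mono {A B : Finset (Fin n)} (hA : IsTransOn T A) (hBA : B ⊆ A) :
    IsTransOn T B :=
  fun u hu v hv w hw => hA u (hBA hu) v (hBA hv) w (hBA hw)

theorem isTransOn_of_card_le_two {A : Finset (Fin n)} (hA : #A ≤ 2) : IsTransOn T A := by
  intro a ha b hb c hc hab hbc
  by_cases hac : a = c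
  · subst hac
    exact absurd hbc (T.rel_asymm hab)
  · exact absurd (two_lt_card_iff.2 ⟨a, b, c, ha, hb, hc, T.ne_of_rel hab, hac, T.ne_of_rel hbc⟩)
      hA.not_gt

theorem _root_.IsTransOn.insert_of_dominates {B : Finset (Fin n)} {u : Fin n}
    (hB : IsTransOn T B) (hu : ∀ b ∈ B, T.rel u b) : IsTransOn T (insert u B) := by
  intro a ha b hb c hc hab hbc
  rw [mem_insert] at ha hb hc
  rcases hc with rfl | hc
  · rcases hb with rfl | hb
    · simp [T.irrefl] at hbc
    · exact absurd hbc (T.rel_asymm (hu b hb))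
  rcases hb with rfl | hb
  · rcases ha with rfl | ha
    · simp [T.irrefl] at hab
    · exact absurd hab (T.rel_asymm (hu a ha))
  rcases ha with rfl | ha
  · exact hu c hc
  · exact hB a ha b hb c hc hab hbc

theorem _root_.IsTransOn.insert_of_dominated {B : Finset (Fin n)} {v : Fin n}
    (hB : IsTransOn T B) (hv : ∀ b ∈ B, T.rel b v) : IsTransOn T (insert v B) := by
  intro a ha b hb c hc hab hbc
  rw [mem_insert] at ha hb hc
  rcases ha with rfl | ha
  · rcases hb with rfl | hb
    · simp [T.irrefl] at hab
    · exact absurd hab (T.rel_asymm (hv b hb))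
  rcases hb with rfl | hb
  · rcases hc with rfl | hc
    · simp [T.irrefl] at hbc
    · exact absurd hbc (T.rel_asymm (hv c hc))
  rcases hc with rfl | hc
  · exact hv a ha
  · exact hB a ha b hb c hc hab hbc

variable (T) in
/-- For transitive `A`, the position of `w` in the linear order that `T` induces on `A`. -/
def inRank (A : Finset (Fin n)) (w : Fin n) : ℕ :=
  #(A.filter fun x => T.rel x w)

section inRank

variable {A : Finset (Fin n)} {u v : Fin n}

theorem inRank_lt_card (hu : u ∈ A) : T.inRank A u < #A :=
  card_lt_card ((ssubset_iff_of_subset (filter_subset _ _)).2 ⟨u, hu, by simp [T.irrefl]⟩)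

theorem inRank_lt_inRank (hA : IsTransOn T A) (hu : u ∈ A) (hv : v ∈ A) (huv : T.rel u v) :
    T.inRank A u < T.inRank A v := by
  refine card_lt_card ((ssubset_iff_of_subset fun x hx => ?_).2 ⟨u, ?_, ?_⟩)
  · rw [mem_filter] at hx ⊢
    exact ⟨hx.1, hA x hx.1 u hu v hv hx.2 huv⟩
  · simp [hu, huv]
  · simp [T.irrefl]

theorem rel_iff_inRank_lt (hA : IsTransOn T A) (hu : u ∈ A) (hv : v ∈ A) :
    T.rel u v ↔ T.inRank A u < T.inRank A v := by
  refine ⟨inRank_lt_inRank hA hu hv, fun h => ?_⟩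
  have huv : u ≠ v := by
    rintro rfl
    exact lt_irrefl _ h
  exact (T.rel_or_rel huv).resolve_right fun hvu => (inRank_lt_inRank hA hv hu hvu).not_gt h

theorem inRank_injOn (hA : IsTransOn T A) : Set.InjOn (T.inRank A) A := by
  intro u hu v hv h
  by_contra huv
  rcases T.rel_or_rel huv with huv | hvu
  · exact (inRank_lt_inRank hA hu hv huv).ne h
  · exact (inRank_lt_inRank hA hv hu hvu).ne' h

theorem image_inRank (hA : IsTransOn T A) : A.image (T.inRank A) = range #A := by
  refine eq_of_subset_of_card_le (fun i hi => ?_) ?_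
  · obtain ⟨u, hu, rfl⟩ := mem_image.1 hi
    exact mem_range.2 (inRank_lt_card hu)
  · rw [card_range, card_image_of_injOn (inRank_injOn hA)]

end inRank

theorem _root_.IsTransOn.isoOn_tr {A : Finset (Fin n)} (hA : IsTransOn T A) :
    IsoOn (Tr #A) T A := by
  have hrank : ∀ i : Fin #A, ∃ w ∈ A, T.inRank A w = i := fun i =>
    mem_image.1 (by rw [image_inRank hA]; exact mem_range.2 i.2)
  choose f hfA hf using hrank
  have hinj : Function.Injective f := fun i j h => Fin.ext (by rw [← hf i, ← hf j, h])
  refine ⟨f, hinj, eq_of_subset_of_card_le ?_ ?_, fun i j => ?_⟩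
  · intro w hw
    obtain ⟨i, -, rfl⟩ := mem_image.1 hw
    exact hfA i
  · rw [card_image_of_injective _ hinj, card_univ, Fintype.card_fin]
  · rw [Bool.eq_iff_iff, rel_iff_inRank_lt hA (hfA i) (hfA j), hf, hf]
    exact decide_eq_true_iff.trans Fin.lt_def

theorem isoOn_tr_iff {k : ℕ} {A : Finset (Fin n)} (hk : #A = k) :
    IsoOn (Tr k) T A ↔ IsTransOn T A := by
  refine ⟨?_, fun hA => hk ▸ hA.isoOn_tr⟩
  rintro ⟨f, -, rfl, hf⟩ _ hu _ hv _ hw huv hvw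
  obtain ⟨i, -, rfl⟩ := mem_image.1 hu
  obtain ⟨j, -, rfl⟩ := mem_image.1 hv
  obtain ⟨l, -, rfl⟩ := mem_image.1 hw
  simp only [← hf, Tr, decide_eq_true_eq] at huv hvw ⊢
  exact huv.trans hvw

variable (T) in
theorem copyCount_tr (k : ℕ) : copyCount (Tr k) T = trCount k T := by
  classical
  unfold copyCount trCount
  exact congrArg card (filter_congr fun A hA => isoOn_tr_iff (mem_powersetCard.1 hA).2)

section Between

variable {u v u' v' : Fin n} {P P' : Finset (Fin n)}

theorem rel_of_mem_insert_insert (huv : T.rel u v) (hP : P ⊆ T.between u v) {b : Fin n}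
    (hb : b ∈ insert u (insert v P)) : (b ≠ u → T.rel u b) ∧ (b ≠ v → T.rel b v) := by
  rcases mem_insert.1 hb with rfl | hb
  · exact ⟨fun h => absurd rfl h, fun _ => huv⟩
  rcases mem_insert.1 hb with rfl | hb
  · exact ⟨fun _ => huv, fun h => absurd rfl h⟩
  · exact (T.mem_between.1 (hP hb)).imp (fun h _ => h) (fun h _ => h)

theorem notMem_insert_of_subset_between (huv : T.rel u v) (hP : P ⊆ T.between u v) :
    u ∉ insert v P := by
  intro hu
  rcases mem_insert.1 hu with h | hu
  · exact T.ne_of_rel huv h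
  · simpa [T.irrefl] using (T.mem_between.1 (hP hu)).1

theorem notMem_of_subset_between (hP : P ⊆ T.between u v) : v ∉ P := by
  intro hv
  simpa [T.irrefl] using (T.mem_between.1 (hP hv)).2

theorem card_insert_insert_of_subset_between (huv : T.rel u v) (hP : P ⊆ T.between u v) :
    #(insert u (insert v P)) = #P + 2 := by
  rw [card_insert_of_notMem (notMem_insert_of_subset_between huv hP),
    card_insert_of_notMem (notMem_of_subset_between hP)]

theorem _root_.IsTransOn.insert_insert_of_subset_between (hPtr : IsTransOn T P)
    (huv : T.rel u v) (hP : P ⊆ T.between u v) : IsTransOn T (insert u (insert v P)) := by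
  refine (hPtr.insert_of_dominated fun b hb => (T.mem_between.1 (hP hb)).2).insert_of_dominates
    fun b hb => (rel_of_mem_insert_insert huv hP (mem_insert_of_mem hb)).1 ?_
  rintro rfl
  exact notMem_insert_of_subset_between huv hP hb

theorem eq_of_insert_insert_eq (huv : T.rel u v) (hP : P ⊆ T.between u v)
    (huv' : T.rel u' v') (hP' : P' ⊆ T.between u' v')
    (h : insert u (insert v P) = insert u' (insert v' P')) : u = u' ∧ v = v' ∧ P = P' := by
  have hmem (b : Fin n) : b ∈ insert u (insert v P) ↔ b ∈ insert u' (insert v' P') := by rw [h]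
  obtain rfl : u = u' := by
    by_contra hne
    exact T.rel_asymm
      ((rel_of_mem_insert_insert huv hP ((hmem u').2 (mem_insert_self _ _))).1 (Ne.symm hne))
      ((rel_of_mem_insert_insert huv' hP' ((hmem u).1 (mem_insert_self _ _))).1 hne)
  obtain rfl : v = v' := by
    by_contra hne
    have hv : v ∈ insert u (insert v P) := mem_insert_of_mem (mem_insert_self v P)
    have hv' : v' ∈ insert u (insert v' P') := mem_insert_of_mem (mem_insert_self v' P')
    exact T.rel_asymm ((rel_of_mem_insert_insert huv' hP' ((hmem v).1 hv)).2 hne)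
      ((rel_of_mem_insert_insert huv hP ((hmem v').2 hv')).2 (Ne.symm hne))
  refine ⟨rfl, rfl, ?_⟩
  rw [← erase_insert (notMem_of_subset_between hP), ← erase_insert (notMem_of_subset_between hP'),
    ← erase_insert (notMem_insert_of_subset_between huv hP),
    ← erase_insert (notMem_insert_of_subset_between huv' hP'), h]

end Between

theorem _root_.IsTransOn.exists_eq_insert_insert {S : Finset (Fin n)} {j : ℕ}
    (hS : IsTransOn T S) (hcard : #S = j + 2) :
    ∃ u v P, T.rel u v ∧ P ⊆ T.between u v ∧ #P = j ∧ IsTransOn T P ∧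
      insert u (insert v P) = S := by
  obtain ⟨f, -, rfl, hf⟩ := (isoOn_tr_iff hcard).2 hS
  have hrel (i k : Fin (j + 2)) (h : i < k) : T.rel (f i) (f k) := by
    rw [← hf]
    simpa [Tr] using h
  have hlast : T.rel (f 0) (f (Fin.last _)) := hrel _ _ Fin.last_pos
  have h0 : f 0 ∈ univ.image f := mem_image_of_mem f (mem_univ _)
  have hlast_mem : f (Fin.last _) ∈ (univ.image f).erase (f 0) :=
    mem_erase.2 ⟨(T.ne_of_rel hlast).symm, mem_image_of_mem f (mem_univ _)⟩
  refine ⟨f 0, f (Fin.last _), ((univ.image f).erase (f 0)).erase (f (Fin.last _)), hlast,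
    fun b hb => ?_, ?_, hS.mono ((erase_subset _ _).trans (erase_subset _ _)), ?_⟩
  · obtain ⟨hb_last, hb_zero, hb⟩ := by simpa only [mem_erase] using hb
    obtain ⟨i, -, rfl⟩ := mem_image.1 hb
    refine T.mem_between.2 ⟨hrel _ _ ?_, hrel _ _ ?_⟩
    · exact (Fin.pos_iff_ne_zero' i).2 (by rintro rfl; exact hb_zero rfl)
    · exact Fin.lt_last_iff_ne_last.2 (by rintro rfl; exact hb_last rfl)
  · rw [card_erase_of_mem hlast_mem, card_erase_of_mem h0, hcard]
    rfl
  · rw [insert_erase hlast_mem, insert_erase h0]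

open scoped Classical in
variable (T) in
theorem trCount_add_two (j : ℕ) :
    trCount (j + 2) T =
      ∑ p ∈ T.arcs, #(((T.between p.1 p.2).powersetCard j).filter (IsTransOn T)) := by
  rw [← card_sigma, trCount]
  symm
  refine card_bij (fun x _ => insert x.1.1 (insert x.1.2 x.2)) ?_ ?_ ?_
  · rintro ⟨⟨u, v⟩, P⟩ hx
    simp only [mem_sigma, mem_arcs, mem_filter, mem_powersetCard] at hx ⊢
    obtain ⟨huv, ⟨hP, rfl⟩, hPtr⟩ := hx
    exact ⟨⟨subset_univ _, card_insert_insert_of_subset_between huv hP⟩,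
      hPtr.insert_insert_of_subset_between huv hP⟩
  · rintro ⟨⟨u, v⟩, P⟩ hx ⟨⟨u', v'⟩, P'⟩ hx' h
    simp only [mem_sigma, mem_arcs, mem_filter, mem_powersetCard] at hx hx'
    obtain ⟨rfl, rfl, rfl⟩ := eq_of_insert_insert_eq hx.1 hx.2.1.1 hx'.1 hx'.2.1.1 h
    rfl
  · intro S hS
    simp only [mem_filter, mem_powersetCard] at hS
    obtain ⟨u, v, P, huv, hP, hcard, hPtr, rfl⟩ := hS.2.exists_eq_insert_insert hS.1.2
    exact ⟨⟨(u, v), P⟩, by simp [mem_arcs, huv, hP, hcard, hPtr], rfl⟩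

variable (T) in
theorem trCount_add_two_of_le_two {j : ℕ} (hj : j ≤ 2) :
    trCount (j + 2) T = ∑ p ∈ T.arcs, (Dcount T p.1 p.2).choose j := by
  classical
  rw [trCount_add_two]
  refine sum_congr rfl fun p _ => ?_
  rw [filter_true_of_mem fun P hP => isTransOn_of_card_le_two ((mem_powersetCard.1 hP).2 ▸ hj),
    card_powersetCard]
  rfl

variable (T) in
theorem sq_trCount_three_le :
    (trCount 3 T : ℝ) ^ 2 ≤ n.choose 2 * (2 * trCount 4 T + trCount 3 T) := by
  have hsq (d : ℕ) : (d : ℝ) ^ 2 = 2 * (d.choose 2 : ℝ) + d := by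
    rw [Nat.cast_choose_two]
    ring
  rw [T.trCount_add_two_of_le_two (j := 1) (by norm_num),
    T.trCount_add_two_of_le_two (j := 2) le_rfl]
  simp only [Nat.choose_one_right]
  push_cast
  calc (∑ p ∈ T.arcs, (Dcount T p.1 p.2 : ℝ)) ^ 2
      ≤ #T.arcs * ∑ p ∈ T.arcs, (Dcount T p.1 p.2 : ℝ) ^ 2 := sq_sum_le_card_mul_sum_sq
    _ = #T.arcs * (2 * ∑ p ∈ T.arcs, ((Dcount T p.1 p.2).choose 2 : ℝ) +
          ∑ p ∈ T.arcs, (Dcount T p.1 p.2 : ℝ)) := by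
        simp only [hsq, sum_add_distrib, mul_sum]
    _ ≤ _ := by
        gcongr
        exact_mod_cast T.card_arcs_le

variable (T) in
theorem two_thirds_density_tr3_sq_le (hn : 4 ≤ n) :
    2 / 3 * density (Tr 3) T ^ 2 ≤ density (Tr 4) T + 2 / (n - 2) := by
  have hn' : (4 : ℝ) ≤ n := by exact_mod_cast hn
  have h3 := cast_choose_succ_right_eq (R := ℝ) (n := n) (k := 2) (by omega)
  have h4 := cast_choose_succ_right_eq (R := ℝ) (n := n) (k := 3) (by omega)
  norm_num at h3 h4
  have hc3_pos : (0 : ℝ) < n.choose 3 := by exact_mod_cast Nat.choose_pos (by omega)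
  have ht3 : (trCount 3 T : ℝ) ≤ n.choose 3 := by exact_mod_cast T.trCount_le_choose 3
  rw [density, density, copyCount_tr, copyCount_tr]
  set t3 : ℝ := (trCount 3 T : ℝ)
  set t4 : ℝ := (trCount 4 T : ℝ)
  set c3 : ℝ := (n.choose 3 : ℝ)
  have hc2 : (n.choose 2 : ℝ) = 3 * c3 / (n - 2) := by
    rw [eq_div_iff (by linarith)]
    linarith
  have hc4 : (n.choose 4 : ℝ) = c3 * (n - 3) / 4 := by
    rw [eq_div_iff four_ne_zero]
    linarith
  calc 2 / 3 * (t3 / c3) ^ 2 = 2 * t3 ^ 2 / (3 * c3 ^ 2) := by ring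
    _ ≤ 2 * (n.choose 2 * (2 * t4 + t3)) / (3 * c3 ^ 2) := by
        gcongr
        exact T.sq_trCount_three_le
    _ = 4 * t4 / ((n - 2) * c3) + 2 / (n - 2) * (t3 / c3) := by
        rw [hc2]
        field_simp
        ring
    _ ≤ 4 * t4 / ((n - 3) * c3) + 2 / (n - 2) * 1 := by
        gcongr
        · exact mul_pos (by linarith) hc3_pos
        · linarith
        · exact div_nonneg zero_le_two (by linarith)
        · exact div_le_one_of_le₀ ht3 hc3_pos.le
    _ = t4 / n.choose 4 + 2 / (n - 2) := by
        rw [hc4]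
        field_simp

end Tournament

/-- for every `ε > 0`, every sufficiently large tournament satisfies
`p(Tr_4, T) ≥ (2/3) · p(Tr_3, T)² - ε`. -/
theorem density_tr4_ge_tr3_sq (ε : ℝ) (hε : 0 < ε) :
    ∃ N : ℕ, ∀ n : ℕ, N ≤ n → ∀ T : Tournament n,
      2 / 3 * density (Tr 3) T ^ 2 - ε ≤ density (Tr 4) T := by
  refine ⟨⌈2 / ε⌉₊ + 4, fun n hn T => ?_⟩
  have hgap : 2 / ε < (n : ℝ) - 2 := by
    have hn' : ((⌈2 / ε⌉₊ + 4 : ℕ) : ℝ) ≤ n := by exact_mod_cast hn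
    push_cast at hn'
    linarith [Nat.le_ceil (2 / ε)]
  have herr : 2 / ((n : ℝ) - 2) ≤ ε :=
    (div_le_comm₀ ((div_pos two_pos hε).trans hgap) hε).2 hgap.le
  linarith [T.two_thirds_density_tr3_sq_le (by omega)]
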